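/- Let n, m ≥ 1, let f̂ : ℝⁿ → ℝ be continuously differentiable, let B be a real m × n matrix, let λ > 0, and let 0 < p < 1. Define f(x) = f̂(x) + λ Σ_{i=1}^m |(Bx)_i|^p and f̃(x, μ) = f̂(x) + λ Σ_{i=1}^m s_μ((Bx)_i)^p for μ > 0. Then f̃ is a smoothing function of f: for every μ > 0 the map x ↦ f̃(x, μ) is continuously differentiable on ℝⁿ, and |f̃(x, μ) − f(x)| ≤ λ m (μ/4)^p for all x ∈ ℝⁿ and μ > 0. -/

import Mathlib

/-!
On `|t| ≥ μ/2` and on `|t| < μ/2` alike,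
`s_μ(t) = t²/μ + μ/4 - ((t - μ/2)₊² + (-t - μ/2)₊²)/μ`, and `x ↦ x₊²` is `C¹`; hence `s_μ`
is `C¹`, and so is `s_μ ^ p` because `s_μ > 0`. For the bound, `|t| ≤ s_μ(t) ≤ |t| + μ/4`
and the subadditivity of `u ↦ u ^ p` for `0 ≤ p ≤ 1` give `0 ≤ s_μ(t)^p - |t|^p ≤ (μ/4)^p`.
-/

open Filter Topology

/-- The uniform smoothing function of the absolute value:
`s_μ(t) = |t|` if `|t| ≥ μ/2`, and `s_μ(t) = t²/μ + μ/4` if `|t| < μ/2`. -/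
noncomputable def sMu (μ t : ℝ) : ℝ := if μ / 2 ≤ |t| then |t| else t ^ 2 / μ + μ / 4

theorem hasDerivAt_max_zero_sq (x : ℝ) :
    HasDerivAt (fun y : ℝ => max y 0 ^ 2) (2 * max x 0) x := by
  refine hasDerivAt_of_hasDerivAt_of_ne' (x := 0) (fun y hy => ?_)
    (by fun_prop : Continuous fun y : ℝ => max y 0 ^ 2).continuousAt
    (by fun_prop : Continuous fun y : ℝ => 2 * max y 0).continuousAt x
  rcases hy.lt_or_gt with hneg | hpos
  · have hzero : (fun y : ℝ => max y 0 ^ 2) =ᶠ[𝓝 y] fun _ => 0 := by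
      filter_upwards [eventually_lt_nhds hneg] with z hz
      simp [max_eq_right hz.le]
    simpa [max_eq_right hneg.le] using (hasDerivAt_const y (0 : ℝ)).congr_of_eventuallyEq hzero
  · have hsq : (fun y : ℝ => max y 0 ^ 2) =ᶠ[𝓝 y] fun z => z ^ 2 := by
      filter_upwards [eventually_gt_nhds hpos] with z hz
      rw [max_eq_left hz.le]
    simpa [max_eq_left hpos.le] using (hasDerivAt_pow 2 y).congr_of_eventuallyEq hsq

theorem contDiff_max_zero_sq : ContDiff ℝ 1 fun x : ℝ => max x 0 ^ 2 := by
  rw [contDiff_one_iff_deriv]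
  refine ⟨fun x => (hasDerivAt_max_zero_sq x).differentiableAt, ?_⟩
  rw [funext fun x => (hasDerivAt_max_zero_sq x).deriv]
  fun_prop

theorem sMu_eq_quadratic_sub_max_zero_sq {μ : ℝ} (hμ : 0 < μ) (t : ℝ) :
    sMu μ t = t ^ 2 / μ + μ / 4 - (max (t - μ / 2) 0 ^ 2 + max (-t - μ / 2) 0 ^ 2) / μ := by
  unfold sMu
  split_ifs with h
  · rcases le_abs'.1 h with hneg | hpos
    · rw [max_eq_right (by linarith : t - μ / 2 ≤ 0), max_eq_left (by linarith : 0 ≤ -t - μ / 2),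
        abs_of_neg (by linarith)]
      field_simp
      ring
    · rw [max_eq_left (by linarith : 0 ≤ t - μ / 2), max_eq_right (by linarith : -t - μ / 2 ≤ 0),
        abs_of_pos (by linarith)]
      field_simp
      ring
  · obtain ⟨hlo, hhi⟩ := abs_lt.1 (not_le.1 h)
    rw [max_eq_right (by linarith : t - μ / 2 ≤ 0), max_eq_right (by linarith : -t - μ / 2 ≤ 0)]
    ring

theorem contDiff_sMu {μ : ℝ} (hμ : 0 < μ) : ContDiff ℝ 1 (sMu μ) := by
  rw [funext (sMu_eq_quadratic_sub_max_zero_sq hμ)]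
  have hq := contDiff_max_zero_sq
  exact ((contDiff_id.pow 2).div_const μ).add contDiff_const |>.sub <|
    ((hq.comp (contDiff_id.sub contDiff_const)).add
      (hq.comp (contDiff_id.neg.sub contDiff_const))).div_const μ

theorem sMu_pos {μ : ℝ} (hμ : 0 < μ) (t : ℝ) : 0 < sMu μ t := by
  unfold sMu
  split_ifs with h
  · linarith
  · positivity

theorem abs_le_sMu (μ t : ℝ) : |t| ≤ sMu μ t := by
  unfold sMu
  split_ifs with h
  · exact le_rfl
  · have hμ : 0 < μ := by linarith [abs_nonneg t, not_le.1 h]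
    rw [← sub_nonneg]
    have hsq : t ^ 2 / μ + μ / 4 - |t| = (|t| - μ / 2) ^ 2 / μ := by
      field_simp
      rw [← sq_abs t]
      ring
    rw [hsq]
    positivity

theorem sMu_le_abs_add {μ : ℝ} (hμ : 0 ≤ μ) (t : ℝ) : sMu μ t ≤ |t| + μ / 4 := by
  unfold sMu
  split_ifs with h
  · linarith
  · have hlt := not_le.1 h
    have hquad : t ^ 2 / μ ≤ |t| := by
      rw [div_le_iff₀ (by linarith [abs_nonneg t])]
      nlinarith [sq_abs t, abs_nonneg t]
    linarith

theorem abs_sMu_rpow_sub_abs_rpow_le {μ p : ℝ} (hμ : 0 < μ) (hp : 0 ≤ p) (hp1 : p ≤ 1)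
    (t : ℝ) : |sMu μ t ^ p - |t| ^ p| ≤ (μ / 4) ^ p := by
  have hmono : |t| ^ p ≤ sMu μ t ^ p := Real.rpow_le_rpow (abs_nonneg t) (abs_le_sMu μ t) hp
  have hsub : sMu μ t ^ p ≤ |t| ^ p + (μ / 4) ^ p :=
    calc sMu μ t ^ p ≤ (|t| + μ / 4) ^ p :=
          Real.rpow_le_rpow (sMu_pos hμ t).le (sMu_le_abs_add hμ.le t) hp
      _ ≤ |t| ^ p + (μ / 4) ^ p := Real.rpow_add_le_add_rpow (abs_nonneg t) (by positivity) hp hp1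
  rw [abs_of_nonneg (sub_nonneg.2 hmono)]
  linarith

theorem contDiff_mulVec_apply {m n : ℕ} {k : WithTop ℕ∞} (B : Matrix (Fin m) (Fin n) ℝ)
    (i : Fin m) : ContDiff ℝ k fun x : EuclideanSpace ℝ (Fin n) => B.mulVec x i := by
  simp only [Matrix.mulVec, dotProduct]
  fun_prop

theorem smoothing_of_lp_model_general (n m : ℕ)
    (fhat : EuclideanSpace ℝ (Fin n) → ℝ) (hfhat : ContDiff ℝ 1 fhat)
    (B : Matrix (Fin m) (Fin n) ℝ)
    (lam : ℝ) (hlam : 0 < lam) (p : ℝ) (hp0 : 0 < p) (hp1 : p < 1) :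
    (∀ μ > (0 : ℝ), ContDiff ℝ 1
      (fun x : EuclideanSpace ℝ (Fin n) =>
        fhat x + lam * ∑ i, sMu μ (B.mulVec x i) ^ p)) ∧
    ∀ (x : EuclideanSpace ℝ (Fin n)), ∀ μ > (0 : ℝ),
      |(fhat x + lam * ∑ i, sMu μ (B.mulVec x i) ^ p) -
        (fhat x + lam * ∑ i, |B.mulVec x i| ^ p)| ≤ lam * m * (μ / 4) ^ p := by
  refine ⟨fun μ hμ => ?_, fun x μ hμ => ?_⟩
  · have hsmooth := (contDiff_sMu hμ).rpow_const_of_ne (p := p) fun t => (sMu_pos hμ t).ne'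
    exact hfhat.add (contDiff_const.mul
      (ContDiff.sum fun i _ => hsmooth.comp (contDiff_mulVec_apply B i)))
  · rw [add_sub_add_left_eq_sub, ← mul_sub, ← Finset.sum_sub_distrib, abs_mul, abs_of_pos hlam,
      mul_assoc]
    gcongr
    calc |∑ i, (sMu μ (B.mulVec x i) ^ p - |B.mulVec x i| ^ p)|
        ≤ ∑ i, |sMu μ (B.mulVec x i) ^ p - |B.mulVec x i| ^ p| := Finset.abs_sum_le_sum_abs _ _
      _ ≤ ∑ _i : Fin m, (μ / 4) ^ p :=
          Finset.sum_le_sum fun i _ => abs_sMu_rpow_sub_abs_rpow_le hμ hp0.le hp1.le _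
      _ = m * (μ / 4) ^ p := by simp

/-- With `f̂ : ℝⁿ → ℝ` continuously differentiable, `B` an `m × n` real matrix, `λ > 0`,
and `0 < p < 1`, the function `f̃(x,μ) = f̂(x) + λ Σᵢ s_μ((Bx)ᵢ)ᵖ` is a smoothing
function of `f(x) = f̂(x) + λ Σᵢ |(Bx)ᵢ|ᵖ`: for every `μ > 0` the map `x ↦ f̃(x,μ)` is
continuously differentiable on `ℝⁿ`, and `|f̃(x,μ) − f(x)| ≤ λ m (μ/4)ᵖ` for all `x`
and all `μ > 0`. -/
theorem smoothing_of_lp_model (n m : ℕ) (hn : 1 ≤ n) (hm : 1 ≤ m)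
    (fhat : EuclideanSpace ℝ (Fin n) → ℝ) (hfhat : ContDiff ℝ 1 fhat)
    (B : Matrix (Fin m) (Fin n) ℝ)
    (lam : ℝ) (hlam : 0 < lam) (p : ℝ) (hp0 : 0 < p) (hp1 : p < 1) :
    (∀ μ > (0 : ℝ), ContDiff ℝ 1
      (fun x : EuclideanSpace ℝ (Fin n) =>
        fhat x + lam * ∑ i, sMu μ (B.mulVec x i) ^ p)) ∧
    ∀ (x : EuclideanSpace ℝ (Fin n)), ∀ μ > (0 : ℝ),
      |(fhat x + lam * ∑ i, sMu μ (B.mulVec x i) ^ p) -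
        (fhat x + lam * ∑ i, |B.mulVec x i| ^ p)| ≤ lam * m * (μ / 4) ^ p :=
  smoothing_of_lp_model_general n m fhat hfhat B lam hlam p hp0 hp1
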